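/- Let α > −1 and β > −1 be real numbers and n ≥ 1 an integer. Then for all real x, (1−x²) (d²/dx²) S_n^{(α,β)}(x) + [β−α−(α+β+2)x] (d/dx) S_n^{(α,β)}(x) + n(n+α+β+1) S_n^{(α,β)}(x) = [2/((α+1)(β+1))] [(α+β+2)_n / n!] [(α+β+2)_{n−1} / (n−1)!] [(β+1)(x−1) − (α+1)(x+1)] (d²/dx²) P_n^{(α,β)}(x). -/

import Mathlib

open Polynomial Finset

/-!
Write `L = (1 - x²) D² - q D + λ` for the Jacobi operator, where `q = (β+1)(x-1) + (α+1)(x+1)`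
and `λ = n(n+α+β+1)`, so that `L P = 0` for `P = P_n^{(α,β)}` and `S_n = c (λ P - q P')`.
Differentiating `L P = 0` computes `L P'`, and since `q` is linear the Leibniz rule gives
`L (q P') = (2 (1 - x²) q' + 2 x q) P''`. Hence `L S_n = -c L (q P')` is a multiple of `P''`.
-/

/-- The Pochhammer symbol (rising factorial) `(a)_k = a (a+1) ⋯ (a+k-1)`. -/
noncomputable def poch (a : ℝ) (k : ℕ) : ℝ := (ascPochhammer ℝ k).eval a

/-- The Jacobi polynomial
`P_n^{(α,β)}(x) = Σ_{k=0}^{n} [(n+α+β+1)_k / k!] [(α+k+1)_{n−k} / (n−k)!] ((x−1)/2)^k`,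
valid for all real `α`, `β`. -/
noncomputable def jacobiP (α β : ℝ) (n : ℕ) (x : ℝ) : ℝ :=
  ∑ k ∈ Finset.range (n + 1),
    poch ((n : ℝ) + α + β + 1) k / Nat.factorial k *
      (poch (α + k + 1) (n - k) / Nat.factorial (n - k)) * ((x - 1) / 2) ^ k

/-- `S_n^{(α,β)}(x) = [1/((α+1)(β+1))] [(α+β+2)_n (α+β+2)_{n−1} / (n! (n−1)!)]
`[n(n+α+β+1) P_n^{(α,β)}(x) − {(β+1)(x−1)+(α+1)(x+1)} P_n^{(α,β)}'(x)]`. -/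
noncomputable def Sfun (α β : ℝ) (n : ℕ) (x : ℝ) : ℝ :=
  1 / ((α + 1) * (β + 1)) *
    (poch (α + β + 2) n * poch (α + β + 2) (n - 1) /
      (Nat.factorial n * Nat.factorial (n - 1))) *
    ((n : ℝ) * ((n : ℝ) + α + β + 1) * jacobiP α β n x -
      ((β + 1) * (x - 1) + (α + 1) * (x + 1)) * deriv (jacobiP α β n) x)

section SecondOrderOp

variable {R : Type*} [CommRing R]

noncomputable def secondOrderOp (a b : R[X]) (c : R) (f : R[X]) : R[X] :=
  a * derivative (derivative f) + b * derivative f + C c * f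

variable (a b : R[X]) (c : R)

theorem secondOrderOp_sub (f g : R[X]) :
    secondOrderOp a b c (f - g) = secondOrderOp a b c f - secondOrderOp a b c g := by
  simp only [secondOrderOp, derivative_sub]
  ring

theorem secondOrderOp_C_mul (r : R) (f : R[X]) :
    secondOrderOp a b c (C r * f) = C r * secondOrderOp a b c f := by
  simp only [secondOrderOp, derivative_C_mul]
  ring

theorem secondOrderOp_sum {ι : Type*} (s : Finset ι) (f : ι → R[X]) :
    secondOrderOp a b c (∑ i ∈ s, f i) = ∑ i ∈ s, secondOrderOp a b c (f i) := by
  simp only [secondOrderOp, derivative_sum, mul_sum, ← sum_add_distrib]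

theorem secondOrderOp_derivative_of_eq_zero {p : R[X]} (hp : secondOrderOp a b c p = 0) :
    secondOrderOp a b c (derivative p) =
      -(derivative a * derivative (derivative p) + derivative b * derivative p) := by
  have h := congrArg derivative hp
  simp only [secondOrderOp, derivative_add, derivative_mul, derivative_C, zero_mul, zero_add,
    derivative_zero] at h
  simp only [secondOrderOp]
  linear_combination h

theorem secondOrderOp_mul_derivative_of_eq_zero (q : R[X]) {p : R[X]}
    (hp : secondOrderOp a (-q) c p = 0) :
    secondOrderOp a (-q) c (q * derivative p) =
      (2 * a * derivative q - q * derivative a) * derivative (derivative p) +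
        a * derivative (derivative q) * derivative p := by
  have h := secondOrderOp_derivative_of_eq_zero a (-q) c hp
  simp only [secondOrderOp, derivative_mul, derivative_add, derivative_neg] at h ⊢
  linear_combination q * h

end SecondOrderOp

theorem Polynomial.iteratedDeriv_eval {𝕜 : Type*} [NontriviallyNormedField 𝕜] (p : 𝕜[X])
    (k : ℕ) :
    iteratedDeriv k (fun x => p.eval x) = fun x => (derivative^[k] p).eval x := by
  induction k with
  | zero => simp
  | succ k ih =>
    rw [iteratedDeriv_succ, ih, Function.iterate_succ_apply']
    ext x
    exact Polynomial.deriv _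

theorem eval_secondOrderOp {𝕜 : Type*} [NontriviallyNormedField 𝕜] (a b f : 𝕜[X]) (c x : 𝕜) :
    (secondOrderOp a b c f).eval x = a.eval x * iteratedDeriv 2 (fun y => f.eval y) x +
      b.eval x * deriv (fun y => f.eval y) x + c * f.eval x := by
  simp [secondOrderOp, Polynomial.iteratedDeriv_eval, Polynomial.deriv]

theorem poch_succ_right (a : ℝ) (k : ℕ) : poch a (k + 1) = poch a k * (a + k) := by
  simp [poch, ascPochhammer_succ_right]

theorem poch_succ_left (a : ℝ) (k : ℕ) : poch a (k + 1) = a * poch (a + 1) k := by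
  simp [poch, ascPochhammer_succ_left, eval_comp]

noncomputable def jacobiCoeff (α β : ℝ) (n k : ℕ) : ℝ :=
  poch ((n : ℝ) + α + β + 1) k / Nat.factorial k *
    (poch (α + k + 1) (n - k) / Nat.factorial (n - k))

theorem jacobiCoeff_succ_mul (α β : ℝ) {n k : ℕ} (hk : k < n) :
    jacobiCoeff α β n (k + 1) * ((k + 1) * (k + 1 + α)) =
      jacobiCoeff α β n k * ((n - k) * (n + k + α + β + 1)) := by
  obtain ⟨m, rfl⟩ := Nat.exists_eq_add_of_lt hk
  have hm : k + m + 1 - k = m + 1 := by omega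
  have hm' : k + m + 1 - (k + 1) = m := by omega
  have hα : (α + ↑(k + 1) + 1 : ℝ) = α + k + 1 + 1 := by push_cast; ring
  simp only [jacobiCoeff, hm, hm', hα]
  rw [poch_succ_right _ k, poch_succ_left _ m, Nat.factorial_succ, Nat.factorial_succ]
  push_cast
  field_simp
  ring

noncomputable def halfXSubOne : ℝ[X] := C 2⁻¹ * (X - 1)

noncomputable def jacobiPoly (α β : ℝ) (n : ℕ) : ℝ[X] :=
  ∑ k ∈ range (n + 1), C (jacobiCoeff α β n k) * halfXSubOne ^ k

theorem jacobiP_eq_eval (α β : ℝ) (n : ℕ) :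
    jacobiP α β n = fun x => (jacobiPoly α β n).eval x := by
  ext x
  simp only [jacobiP, jacobiPoly, jacobiCoeff, halfXSubOne, eval_finsetSum, eval_mul, eval_pow,
    eval_C, eval_sub, eval_X, eval_one]
  exact sum_congr rfl fun k _ => by ring

/-- `-jacobiDrift α β` is the first-order coefficient `β - α - (α + β + 2) x` of the Jacobi
operator. -/
noncomputable def jacobiDrift (α β : ℝ) : ℝ[X] := C (β + 1) * (X - 1) + C (α + 1) * (X + 1)

theorem secondOrderOp_halfXSubOne_pow (α β : ℝ) (n k : ℕ) :
    secondOrderOp (1 - X ^ 2) (-jacobiDrift α β) (n * (n + α + β + 1)) (halfXSubOne ^ k) =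
      C ((n - k) * (n + k + α + β + 1)) * halfXSubOne ^ k -
        C (k * (k + α)) * halfXSubOne ^ (k - 1) := by
  apply Polynomial.funext
  intro y
  rcases k with _ | _ | k <;>
    simp [secondOrderOp, halfXSubOne, jacobiDrift, derivative_pow] <;> ring

theorem secondOrderOp_jacobiPoly (α β : ℝ) (n : ℕ) :
    secondOrderOp (1 - X ^ 2) (-jacobiDrift α β) (n * (n + α + β + 1)) (jacobiPoly α β n) = 0 := by
  simp only [jacobiPoly, secondOrderOp_sum, secondOrderOp_C_mul, secondOrderOp_halfXSubOne_pow,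
    mul_sub, ← mul_assoc, ← C_mul]
  -- The sums telescope: the top term carries the factor `n - n` and the bottom one `0 * (0 + α)`.
  rw [sum_sub_distrib, sum_range_succ, sum_range_succ', sub_eq_zero]
  simp only [sub_self, zero_mul, mul_zero, C_0, CharP.cast_eq_zero, add_zero]
  refine sum_congr rfl fun k hk => ?_
  rw [Nat.add_sub_cancel]
  congr 2
  push_cast
  linear_combination -jacobiCoeff_succ_mul α β (mem_range.mp hk)

theorem jacobi_operator_Sfun_general (α β : ℝ) (n : ℕ) (x : ℝ) :
    (1 - x ^ 2) * iteratedDeriv 2 (Sfun α β n) x +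
      (β - α - (α + β + 2) * x) * deriv (Sfun α β n) x +
      (n : ℝ) * ((n : ℝ) + α + β + 1) * Sfun α β n x
    = 2 / ((α + 1) * (β + 1)) * (poch (α + β + 2) n / Nat.factorial n) *
        (poch (α + β + 2) (n - 1) / Nat.factorial (n - 1)) *
        ((β + 1) * (x - 1) - (α + 1) * (x + 1)) * iteratedDeriv 2 (jacobiP α β n) x := by
  set P := jacobiPoly α β n
  set q := jacobiDrift α β
  set ν : ℝ := n * (n + α + β + 1)
  set c : ℝ := 1 / ((α + 1) * (β + 1)) * (poch (α + β + 2) n * poch (α + β + 2) (n - 1) /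
    (Nat.factorial n * Nat.factorial (n - 1)))
  have hP : secondOrderOp (1 - X ^ 2) (-q) ν P = 0 := secondOrderOp_jacobiPoly α β n
  set S := C c * (C ν * P - q * derivative P)
  have hS : Sfun α β n = fun y => S.eval y := by
    ext y
    simp [S, Sfun, jacobiP_eq_eval, Polynomial.deriv, P, q, jacobiDrift, c, ν]
  have hLS : secondOrderOp (1 - X ^ 2) (-q) ν S =
      -C c * (2 * (1 - X ^ 2) * derivative q + 2 * X * q) * derivative (derivative P) := by
    rw [secondOrderOp_C_mul, secondOrderOp_sub, secondOrderOp_C_mul, hP,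
      secondOrderOp_mul_derivative_of_eq_zero _ _ _ hP]
    simp [q, jacobiDrift]
    ring
  have h := congrArg (eval x) hLS
  rw [eval_secondOrderOp, ← hS] at h
  rw [jacobiP_eq_eval, Polynomial.iteratedDeriv_eval, show Sfun α β n x = S.eval x by rw [hS]]
  simp [q, jacobiDrift] at h ⊢
  linear_combination h

/-- the Jacobi differential operator applied to `S_n^{(α,β)}` gives
`[2/((α+1)(β+1))] [(α+β+2)_n / n!] [(α+β+2)_{n−1} / (n−1)!]
`[(β+1)(x−1) − (α+1)(x+1)] P_n^{(α,β)}''(x)`. -/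
theorem jacobi_operator_Sfun (α β : ℝ) (hα : -1 < α) (hβ : -1 < β)
    (n : ℕ) (hn : 1 ≤ n) (x : ℝ) :
    (1 - x ^ 2) * iteratedDeriv 2 (Sfun α β n) x +
      (β - α - (α + β + 2) * x) * deriv (Sfun α β n) x +
      (n : ℝ) * ((n : ℝ) + α + β + 1) * Sfun α β n x
    = 2 / ((α + 1) * (β + 1)) * (poch (α + β + 2) n / Nat.factorial n) *
        (poch (α + β + 2) (n - 1) / Nat.factorial (n - 1)) *
        ((β + 1) * (x - 1) - (α + 1) * (x + 1)) * iteratedDeriv 2 (jacobiP α β n) x :=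
  jacobi_operator_Sfun_general α β n x
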